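/- arXiv:1911.12493 — 3 statements merged into one kernel-verified Lean document; each statement's English description precedes it below -/
import Mathlib

section
/- Let R be a commutative ring, let e ∈ R be nilpotent, and let x, a, b ∈ R. Suppose that for every n ≥ 0 one has x^n = x^n·a + e·x^{n+1} - x^n·b, with the case n = 0 reading 1 = a + e·x - b. Then 1 = Σ_{i≥0} e^i x^i (a - b), where the sum is finite since e is nilpotent. -/
/-- Lemma 4.2 (algebraic content): breaking apart unity. -/
theorem stmt_1 (R : Type*) [CommRing R] (e x a b : R) (N : ℕ) (hN : e ^ N = 0)
    (h : ∀ n : ℕ, x ^ n = x ^ n * a + e * x ^ (n + 1) - x ^ n * b) :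
    1 = ∑ i ∈ Finset.range N, e ^ i * x ^ i * (a - b) := by
  have hab : a - b = 1 - e * x := by
    linear_combination -(by simpa using h 0 : (1 : R) = a + e * x - b)
  calc (1 : R) = 1 - (e * x) ^ N := by rw [mul_pow, hN, zero_mul, sub_zero]
    _ = (∑ i ∈ Finset.range N, (e * x) ^ i) * (1 - e * x) := (geom_sum_mul_neg _ _).symm
    _ = ∑ i ∈ Finset.range N, e ^ i * x ^ i * (a - b) := by
      simp only [Finset.sum_mul, hab, mul_pow]
end

section
/- Let R be a commutative ring, let r ≤ n+1, and let M = (M_{l,j}) with 0 ≤ l ≤ r-1, 0 ≤ j ≤ n be elements of R such that M_{l, r-1-l} is a unit for each l and M_{l,j} is nilpotent whenever j ≠ r-1-l. Then the rows of M are R-linearly independent: if x₀,…,x_{r-1} ∈ R satisfy Σ_l x_l M_{l,j} = 0 for all j, then x_l = 0 for all l. -/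
/-!
Modulo the nilradical the matrix `A i j := M i (r - 1 - j)` becomes diagonal with unit entries,
so its determinant is a unit there, hence a unit in `R` since nilpotents lie in the Jacobson
radical. A matrix with unit determinant has injective `vecMul`, and `x` is a vector in its kernel.
-/

namespace Matrix

variable {ι R : Type*} [Fintype ι] [DecidableEq ι] [CommRing R]

theorem map_nilradical_eq_diagonal {A : Matrix ι ι R}
    (hoff : ∀ i j, i ≠ j → IsNilpotent (A i j)) :
    (Ideal.Quotient.mk (nilradical R)).mapMatrix A =
      diagonal fun i => Ideal.Quotient.mk (nilradical R) (A i i) := by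
  ext i j
  rcases eq_or_ne i j with rfl | hij
  · simp
  · simpa [hij, Ideal.Quotient.eq_zero_iff_mem, mem_nilradical] using hoff i j hij

theorem isUnit_det_of_isUnit_diag_of_isNilpotent {A : Matrix ι ι R}
    (hdiag : ∀ i, IsUnit (A i i)) (hoff : ∀ i j, i ≠ j → IsNilpotent (A i j)) :
    IsUnit A.det := by
  have : IsLocalHom (Ideal.Quotient.mk (nilradical R)) :=
    isLocalHom_of_le_jacobson_bot _ (Ideal.jacobson_bot (R := R) ▸ nilradical_le_jacobson R)
  apply isUnit_of_map_unit (Ideal.Quotient.mk (nilradical R))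
  rw [RingHom.map_det, map_nilradical_eq_diagonal hoff, det_diagonal]
  exact IsUnit.prod_univ_iff.2 fun i => (hdiag i).map _

theorem eq_zero_of_vecMul_eq_zero_of_isUnit_det {A : Matrix ι ι R} (hA : IsUnit A.det) {v : ι → R}
    (hv : v ᵥ* A = 0) : v = 0 :=
  vecMul_injective_of_isUnit ((isUnit_iff_isUnit_det A).2 hA) (hv.trans (zero_vecMul A).symm)

end Matrix

/-- Rows of a matrix with units on the antidiagonal positions and nilpotent entries
elsewhere are linearly independent. -/
theorem stmt_13 (R : Type*) [CommRing R] (r n : ℕ) (hrn : r ≤ n + 1)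
    (M : ℕ → ℕ → R)
    (hunit : ∀ l < r, IsUnit (M l (r - 1 - l)))
    (hnil : ∀ l < r, ∀ j ≤ n, j ≠ r - 1 - l → IsNilpotent (M l j))
    (x : ℕ → R) (hx : ∀ j ≤ n, ∑ l ∈ Finset.range r, x l * M l j = 0) :
    ∀ l < r, x l = 0 := by
  let A : Matrix (Fin r) (Fin r) R := Matrix.of fun i j => M i (r - 1 - j)
  have hdet : IsUnit A.det :=
    Matrix.isUnit_det_of_isUnit_diag_of_isNilpotent (fun i => hunit i i.2)
      fun i j hij => hnil i i.2 _ (by omega) (by omega)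
  have hker : Matrix.vecMul (fun i : Fin r => x i) A = 0 := by
    ext j
    simpa [Matrix.vecMul, dotProduct, A, Finset.sum_range] using hx (r - 1 - j) (by omega)
  intro l hl
  exact congrFun (Matrix.eq_zero_of_vecMul_eq_zero_of_isUnit_det hdet hker) ⟨l, hl⟩
end

section
/- Let R be a commutative ring, let N ⊆ R be its nilradical, and let u ∈ R and f = a₀ + a₁ t + ⋯ + a_{r-1} t^{r-1} ∈ R[t] with a₁ a unit and a_i ∈ N for all i ≠ 1. Then in any R-algebra S, the elements 1, f(s), f(s)², …, f(s)^{r-1} generate the same R-submodule as 1, s, s², …, s^{r-1} whenever 1, s, …, s^{r-1} is a basis of a free R-submodule of S and s^r lies in the span of 1, s, …, s^{r-1} with coefficients in R. In particular, 1, f(s), …, f(s)^{r-1} is again an R-basis of that submodule. -/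
/-!
Inside `A = R[s]`, which is free on `1, s, …, s^{r-1}`, the element `f(s)` is congruent to
`a₁ s` modulo the extension of the nilradical, so `f(s)^i ≡ a₁^i s^i` and the powers of `f(s)`
span `A` modulo `N • A`. As `N` lies in the Jacobson radical, Nakayama's lemma shows that they
span `A`; a spanning family with as many members as a finite basis is linearly independent
over any commutative ring (Orzech property).
-/

open Submodule

section PowerSpan

variable {R S : Type*} [CommRing R] [CommRing S] [Algebra R S] {r : ℕ} {s : S}

theorem mul_mem_span_pow_of_pow_mem
    (hclosed : s ^ r ∈ span R (Set.range fun i : Fin r => s ^ (i : ℕ))) {x : S}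
    (hx : x ∈ span R (Set.range fun i : Fin r => s ^ (i : ℕ))) :
    s * x ∈ span R (Set.range fun i : Fin r => s ^ (i : ℕ)) := by
  induction hx using span_induction with
  | mem x hx =>
    obtain ⟨i, rfl⟩ := hx
    rw [← pow_succ']
    rcases (show (i : ℕ) + 1 ≤ r from i.2).lt_or_eq with hlt | heq
    · exact subset_span ⟨⟨_, hlt⟩, rfl⟩
    · rwa [heq]
  | zero => simp
  | add x y _ _ hx hy => rw [mul_add]; exact add_mem hx hy
  | smul c x _ hx => rw [mul_smul_comm]; exact smul_mem _ c hx

theorem pow_mem_span_pow (hr : 1 ≤ r)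
    (hclosed : s ^ r ∈ span R (Set.range fun i : Fin r => s ^ (i : ℕ))) (n : ℕ) :
    s ^ n ∈ span R (Set.range fun i : Fin r => s ^ (i : ℕ)) := by
  induction n with
  | zero => exact subset_span ⟨⟨0, hr⟩, rfl⟩
  | succ n ih => rw [pow_succ']; exact mul_mem_span_pow_of_pow_mem hclosed ih

theorem Algebra.adjoin_singleton_toSubmodule_eq_span_pow (hr : 1 ≤ r)
    (hclosed : s ^ r ∈ span R (Set.range fun i : Fin r => s ^ (i : ℕ))) :
    Subalgebra.toSubmodule (Algebra.adjoin R {s}) =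
      span R (Set.range fun i : Fin r => s ^ (i : ℕ)) := by
  refine le_antisymm ((Algebra.adjoin_toSubmodule_le R).mpr ?_) (span_le.mpr ?_)
  · rw [← Submonoid.powers_eq_closure, Submonoid.coe_powers]
    rintro _ ⟨n, rfl⟩
    exact pow_mem_span_pow hr hclosed n
  · rintro _ ⟨i, rfl⟩
    exact pow_mem (Algebra.self_mem_adjoin_singleton R s) _

theorem Subalgebra.span_range_coe_eq_toSubmodule_iff {ι : Type*} (A : Subalgebra R S)
    (v : ι → A) :
    span R (Set.range fun i => (v i : S)) = Subalgebra.toSubmodule A ↔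
      span R (Set.range v) = ⊤ := by
  rw [← (map_injective_of_injective A.toSubmodule.injective_subtype).eq_iff, map_span,
    Submodule.map_top, range_subtype, ← Set.range_comp]
  rfl

end PowerSpan

theorem Module.Basis.linearIndependent_of_span_eq_top {ι R M : Type*} [Finite ι] [CommRing R]
    [AddCommGroup M] [Module R M] (B : Basis ι R M) {w : ι → M}
    (hw : span R (Set.range w) = ⊤) : LinearIndependent R w := by
  have hsurj : Function.Surjective (Finsupp.linearCombination R w) := by
    rw [← LinearMap.range_eq_top, Finsupp.range_linearCombination, hw]
  have hinj := OrzechProperty.injective_of_surjective_endomorphism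
    (B.repr.toLinearMap ∘ₗ Finsupp.linearCombination R w) (B.repr.surjective.comp hsurj)
  rw [LinearMap.coe_comp] at hinj
  exact hinj.of_comp

section Nakayama

variable {R A : Type*} [CommRing R] [CommRing A] [Algebra R A] {I : Ideal R}

theorem sum_mul_pow_sub_smul_mem_map {r : ℕ} (hr : 1 < r) {a : ℕ → R}
    (ha : ∀ i < r, i ≠ 1 → a i ∈ I) (y : A) :
    ∑ i ∈ Finset.range r, algebraMap R A (a i) * y ^ i - a 1 • y ∈ I.map (algebraMap R A) := by
  rw [← Finset.add_sum_erase _ _ (Finset.mem_range.mpr hr), pow_one, ← Algebra.smul_def,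
    add_sub_cancel_left]
  refine Ideal.sum_mem _ fun i hi => Ideal.mul_mem_right _ _ (Ideal.mem_map_of_mem _ ?_)
  obtain ⟨hi1, hir⟩ := Finset.mem_erase.mp hi
  exact ha i (Finset.mem_range.mp hir) hi1

theorem span_pow_eq_top_of_sub_smul_mem (hI : I ≤ Ideal.jacobson ⊥) {r : ℕ} {x y : A} {u : R}
    (hu : IsUnit u) (hy : span R (Set.range fun i : Fin r => y ^ (i : ℕ)) = ⊤)
    (hxy : x - u • y ∈ I.map (algebraMap R A)) :
    span R (Set.range fun i : Fin r => x ^ (i : ℕ)) = ⊤ := by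
  have hfg : (⊤ : Submodule R A).FG := hy ▸ fg_span (Set.finite_range _)
  refine eq_top_iff.mpr (le_of_le_smul_of_le_jacobson_bot hfg hI (hy.ge.trans (span_le.mpr ?_)))
  rintro _ ⟨i, rfl⟩
  have hpow : x ^ (i : ℕ) - u ^ (i : ℕ) • y ^ (i : ℕ) ∈ I • (⊤ : Submodule R A) := by
    rw [Ideal.smul_top_eq_map, ← smul_pow]
    exact Ideal.mem_of_dvd _ (sub_dvd_pow_sub_pow _ _ _) hxy
  rw [SetLike.mem_coe, ← smul_mem_iff_of_isUnit _ (hu.pow i),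
    ← sub_sub_cancel (x ^ (i : ℕ)) (u ^ (i : ℕ) • y ^ (i : ℕ))]
  exact sub_mem (mem_sup_left (subset_span ⟨i, rfl⟩)) (mem_sup_right hpow)

end Nakayama

/-- Twisting a basis 1, s, …, s^{r-1} by a polynomial f with unit linear
coefficient and nilpotent other coefficients yields again a basis of the same
submodule. -/
theorem stmt_18 (R S : Type*) [CommRing R] [CommRing S] [Algebra R S]
    (r : ℕ) (hr : 1 ≤ r) (a : ℕ → R)
    (hunit : IsUnit (a 1))
    (hnil : ∀ i < r, i ≠ 1 → IsNilpotent (a i))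
    (s : S)
    (hli : LinearIndependent R (fun i : Fin r => s ^ (i : ℕ)))
    (hclosed : s ^ r ∈ Submodule.span R (Set.range fun i : Fin r => s ^ (i : ℕ)))
    (fs : S)
    (hfs : fs = ∑ i ∈ Finset.range r, algebraMap R S (a i) * s ^ i) :
    Submodule.span R (Set.range fun i : Fin r => fs ^ (i : ℕ)) =
        Submodule.span R (Set.range fun i : Fin r => s ^ (i : ℕ)) ∧
      LinearIndependent R (fun i : Fin r => fs ^ (i : ℕ)) := by
  rcases hr.eq_or_lt with rfl | hr
  · have hpow : (fun i : Fin 1 => fs ^ (i : ℕ)) = fun i : Fin 1 => s ^ (i : ℕ) :=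
      funext fun i => by simp
    exact ⟨by rw [hpow], hpow ▸ hli⟩
  set A := Algebra.adjoin R {s}
  have hA := Algebra.adjoin_singleton_toSubmodule_eq_span_pow hr.le hclosed
  let y : A := ⟨s, Algebra.self_mem_adjoin_singleton R s⟩
  let x : A := ∑ i ∈ Finset.range r, algebraMap R A (a i) * y ^ i
  have hx : (x : S) = fs := by simp [x, y, hfs]
  have hy : span R (Set.range fun i : Fin r => y ^ (i : ℕ)) = ⊤ :=
    (A.span_range_coe_eq_toSubmodule_iff _).mp hA.symm
  have hxspan : span R (Set.range fun i : Fin r => x ^ (i : ℕ)) = ⊤ :=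
    span_pow_eq_top_of_sub_smul_mem ((nilradical_le_jacobson R).trans_eq Ideal.jacobson_bot.symm)
      hunit hy (sum_mul_pow_sub_smul_mem_map hr hnil y)
  have hyli : LinearIndependent R fun i : Fin r => y ^ (i : ℕ) := hli.of_comp A.val.toLinearMap
  rw [← hx]
  exact ⟨((A.span_range_coe_eq_toSubmodule_iff _).mpr hxspan).trans hA,
    ((Module.Basis.mk hyli hy.ge).linearIndependent_of_span_eq_top hxspan).map' A.val.toLinearMap
      (LinearMap.ker_eq_bot.mpr Subtype.val_injective)⟩
end
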